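/- For every integer m ≥ 7, there exists a positive integer N divisible by m such that π(N) = (N + m^2)/m; consequently, with n = N/m one has π(m·n) = m + n. -/

import Mathlib

/-!
The function `f n = m * π n - n` can rise arbitrarily but falls by at most one per step, so
between a point where `f ≥ m²` and a later point where `f ≤ m²` it takes the value `m²`
exactly, and any such `N` satisfies `N = m * (π N - m)`. Chebyshev's bounds supply both
points. From `2 ^ n ≤ (n + 1) * lcm(1, …, n) ≤ (n + 1) * n ^ π n` we get
`π (2 ^ j) ≥ (2 ^ j - j - 1) / j`, which exceeds `2 ^ j / m + m` at `j = m - 2` once `m ≥ 12`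
(for `7 ≤ m ≤ 11` take `x = 96`, where `π x = 24`); and `π x = O(x / log x)` makes
`m * π y ≤ y` for large `y`.
-/

/-- The k-th prime, 1-indexed: `nthPrime 1 = 2`. -/
noncomputable def nthPrime (k : ℕ) : ℕ := Nat.nth Nat.Prime (k - 1)

/-- `IsS m S` says that `S` is the maximum of `{k*m - p_k : k ≥ 1}`. -/
def IsS (m : ℕ) (S : ℤ) : Prop :=
  IsGreatest {a : ℤ | ∃ k : ℕ, 0 < k ∧ a = (k : ℤ) * m - nthPrime k} S

open scoped Nat.Prime

theorem exists_eq_of_sub_one_le_succ {f : ℕ → ℤ} (hf : ∀ n, f n - 1 ≤ f (n + 1)) {c : ℤ}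
    {a b : ℕ} (hab : a ≤ b) (ha : c ≤ f a) (hb : f b ≤ c) :
    ∃ n, a ≤ n ∧ n ≤ b ∧ f n = c := by
  induction b, hab using Nat.le_induction with
  | base => exact ⟨a, le_rfl, le_rfl, le_antisymm hb ha⟩
  | succ b hab ih =>
    by_cases hfb : f b ≤ c
    · obtain ⟨n, han, hnb, hn⟩ := ih hfb
      exact ⟨n, han, hnb.trans b.le_succ, hn⟩
    · exact ⟨b + 1, hab.trans b.le_succ, le_rfl, le_antisymm hb (by linarith [hf b])⟩

theorem lcmUpto_le_pow_primeCounting (n : ℕ) : Nat.lcmUpto n ≤ n ^ π n := by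
  rcases n.eq_zero_or_pos with rfl | hn
  · simp [Nat.lcmUpto]
  rw [Nat.lcmUpto_eq_prod_pow_log, ← Nat.primesLE_card_eq_primeCounting]
  exact Finset.prod_le_pow_card _ _ _ fun p _ ↦ Nat.pow_log_le_self p hn.ne'

theorem two_pow_le_mul_primeCounting_two_pow (j : ℕ) : 2 ^ j ≤ j * π (2 ^ j) + j + 1 := by
  have h : 2 ^ 2 ^ j ≤ 2 ^ (j * π (2 ^ j) + j + 1) := calc
    2 ^ 2 ^ j ≤ (2 ^ j + 1) * Nat.lcmUpto (2 ^ j) := Chebyshev.two_pow_le_mul_lcmUpto _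
    _ ≤ 2 ^ (j + 1) * (2 ^ j) ^ π (2 ^ j) := by
      gcongr
      · rw [pow_succ]; linarith [Nat.one_le_two_pow (n := j)]
      · exact lcmUpto_le_pow_primeCounting _
    _ = 2 ^ (j * π (2 ^ j) + j + 1) := by rw [← pow_mul, ← pow_add]; ring_nf
  exact (Nat.pow_le_pow_iff_right (by norm_num)).mp h

theorem mul_primeCounting_four_pow_le (k : ℕ) : k * π (4 ^ k) ≤ 2 * 4 ^ k + k * 2 ^ k := by
  rcases k.eq_zero_or_pos with rfl | hk
  · simp
  have h4 : (1 : ℝ) < 4 ^ k := one_lt_pow₀ (by norm_num) hk.ne'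
  have hbound := Chebyshev.pi_le_log4_mul_div h4
  have hsqrt : √((4 : ℝ) ^ k) = 2 ^ k := by
    rw [show (4 : ℝ) ^ k = (2 ^ k) ^ 2 by rw [← pow_mul, mul_comm, pow_mul]; norm_num]
    exact Real.sqrt_sq (by positivity)
  have hlog4 : Real.log 4 = 2 * Real.log 2 := by
    rw [show (4 : ℝ) = 2 ^ 2 by norm_num, Real.log_pow]; norm_num
  have hfloor : ⌊(4 : ℝ) ^ k⌋₊ = 4 ^ k := by exact_mod_cast Nat.floor_natCast _
  rw [hsqrt, Real.log_pow, hlog4, hfloor] at hbound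
  have hfrac : 2 * Real.log 2 * 4 ^ k / (k * Real.log 2) = 2 * 4 ^ k / k := by
    field_simp [(Real.log_pos one_lt_two).ne']
  have hk' : (0 : ℝ) < k := by exact_mod_cast hk
  rw [hfrac, div_add' _ _ _ hk'.ne', le_div_iff₀ hk'] at hbound
  exact_mod_cast (by linarith : (k : ℝ) * π (4 ^ k) ≤ 2 * 4 ^ k + k * 2 ^ k)

theorem primeCounting_ninety_six : π 96 = 24 := by
  simp only [Nat.primeCounting, Nat.primeCounting', Nat.count_succ, Nat.count_zero]
  norm_num

theorem add_two_cube_le_two_pow {j : ℕ} (hj : 10 ≤ j) : (j + 2) ^ 3 ≤ 2 ^ (j + 1) := by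
  induction j, hj using Nat.le_induction with
  | base => norm_num
  | succ j hj ih =>
    calc (j + 1 + 2) ^ 3 ≤ 2 * (j + 2) ^ 3 := by nlinarith [Nat.mul_le_mul hj hj]
      _ ≤ 2 ^ (j + 1 + 1) := by rw [pow_succ _ (j + 1)]; omega

theorem exists_add_sq_le_mul_primeCounting {m : ℕ} (hm : 7 ≤ m) :
    ∃ x, x + m ^ 2 ≤ m * π x := by
  rcases lt_or_ge m 12 with hm12 | hm12
  · refine ⟨96, ?_⟩
    rw [primeCounting_ninety_six]
    interval_cases m <;> norm_num
  obtain ⟨j, rfl⟩ : ∃ j, m = j + 2 := ⟨m - 2, by omega⟩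
  refine ⟨2 ^ j, ?_⟩
  have hlower := two_pow_le_mul_primeCounting_two_pow j
  have hcube : (j + 2) ^ 3 ≤ 2 ^ j * 2 := pow_succ 2 j ▸ add_two_cube_le_two_pow (by omega)
  have hj : 0 < j := by omega
  refine Nat.le_of_mul_le_mul_left ?_ hj
  have hsmall : j * (j + 2) ^ 2 + (j + 2) * (j + 1) ≤ (j + 2) ^ 3 := by nlinarith
  nlinarith [Nat.mul_le_mul_left (j + 2) hlower]

theorem exists_le_and_mul_primeCounting_le (m x : ℕ) : ∃ y, x ≤ y ∧ m * π y ≤ y := by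
  set k := 4 * m + x
  refine ⟨4 ^ k, ?_, ?_⟩
  · exact (Nat.lt_pow_self (by norm_num)).le.trans' (by omega)
  rcases k.eq_zero_or_pos with hk | hk
  · simp [show m = 0 by omega]
  have hupper := mul_primeCounting_four_pow_le k
  have h2m : 2 * m * 2 ^ k ≤ 4 ^ k := by
    rw [show (4 : ℕ) ^ k = 2 ^ k * 2 ^ k by rw [← mul_pow]; norm_num]
    gcongr
    exact (Nat.lt_two_pow_self).le.trans' (by omega)
  refine Nat.le_of_mul_le_mul_left ?_ (by omega : 0 < 2 * k)
  nlinarith [Nat.mul_le_mul_left (2 * m) hupper, Nat.mul_le_mul_left k h2m,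
    Nat.mul_le_mul_right (4 ^ k) (by omega : 4 * m ≤ k)]

theorem dvd_and_primeCounting_mul_div_eq {m N : ℕ} (hm : 0 < m) (h : m * π N = N + m ^ 2) :
    m ∣ N ∧ π (m * (N / m)) = m + N / m := by
  have hmul : N = m * (π N - m) := by
    rw [Nat.mul_sub, h, sq, Nat.add_sub_cancel]
  have hdvd : m ∣ N := ⟨_, hmul⟩
  have hle : m ≤ π N := by nlinarith
  refine ⟨hdvd, ?_⟩
  rw [Nat.mul_div_cancel' hdvd, Nat.div_eq_of_eq_mul_right hm hmul]
  omega

theorem stmt18 (m : ℕ) (hm : 7 ≤ m) :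
    ∃ N : ℕ, 0 < N ∧ m ∣ N ∧ (m : ℤ) * Nat.primeCounting N = N + (m : ℤ) ^ 2 ∧
      Nat.primeCounting (m * (N / m)) = m + N / m := by
  obtain ⟨x, hx⟩ := exists_add_sq_le_mul_primeCounting hm
  obtain ⟨y, hxy, hy⟩ := exists_le_and_mul_primeCounting_le m x
  zify at hx hy
  set f : ℕ → ℤ := fun n ↦ m * π n - n with hf
  have hstep : ∀ n, f n - 1 ≤ f (n + 1) := fun n ↦ by
    have := Nat.monotone_primeCounting n.le_succ
    simp only [hf]
    push_cast
    nlinarith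
  obtain ⟨N, -, -, hN⟩ := exists_eq_of_sub_one_le_succ (c := (m : ℤ) ^ 2) hstep hxy
    (by simp only [hf]; linarith) (by simp only [hf]; nlinarith)
  have hNeq : m * π N = N + m ^ 2 := by zify; simp only [hf] at hN; linarith
  have hNpos : 0 < N := by
    by_contra h0
    rw [show N = 0 by omega, Nat.primeCounting_zero] at hNeq
    nlinarith
  obtain ⟨hdvd, hcount⟩ := dvd_and_primeCounting_mul_div_eq (by omega) hNeq
  exact ⟨N, hNpos, hdvd, by exact_mod_cast hNeq, hcount⟩
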